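/- Let n ≥ 3 and Ω^< = {x ∈ ℝ^{n+1} : x_1 > 0 and x_{n+1} < x_1 x_2 + x_1 Σ_{j=3}^n x_j²}. For every point x ∈ Ω^< there exist q > 0, r ≠ 0, t ∈ ℝ and s = (s_3,…,s_n) ∈ ℝ^{n−2} such that the affine map T_{q,r,t,s}(y) = (q y_1, r²(y_2 − 2Σ_{j=3}^n s_j y_j + t), r(y_3 + s_3), …, r(y_n + s_n), q r²(y_{n+1} + y_1 Σ_{j=3}^n s_j² + t y_1)) sends the point (1, 0, …, 0, −1) to x. Consequently the group of affine maps T_{q,r,t,s} acts transitively on Ω^<. -/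

import Mathlib

/-- The domain `Ω^< = {x ∈ ℝ^{n+1} : x₁ > 0, x_{n+1} < x₁x₂ + x₁ Σ_{j=3}^n x_j²}`
(coordinates are 0-indexed: `x₁ = x 0`, `x₂ = x 1`, `x_j = x (j-1)`, `x_{n+1} = x n`). -/
def omegaLT (n : ℕ) (hn : 3 ≤ n) : Set (Fin (n + 1) → ℝ) :=
  {x | 0 < x 0 ∧ x (Fin.last n) < x 0 * x ⟨1, by omega⟩ +
    x 0 * ∑ j : Fin (n + 1), (if 2 ≤ (j : ℕ) ∧ (j : ℕ) < n then x j ^ 2 else 0)}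

/-- The affine map `T_{q,r,t,s}` : `x₁ ↦ q x₁`, `x₂ ↦ r²(x₂ − 2Σ s_j x_j + t)`,
`x_j ↦ r(x_j + s_j)` (for `3 ≤ j ≤ n`), `x_{n+1} ↦ q r²(x_{n+1} + x₁ Σ s_j² + t x₁)`. -/
def Tmap (n : ℕ) (q r t : ℝ) (s : Fin (n - 2) → ℝ) (x : Fin (n + 1) → ℝ) :
    Fin (n + 1) → ℝ := fun i =>
  if h0 : (i : ℕ) = 0 then q * x i
  else if h1 : (i : ℕ) = 1 then
    r ^ 2 * (x i - 2 * (∑ j : Fin (n - 2), s j * x ⟨(j : ℕ) + 2, by have := j.isLt; omega⟩) + t)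
  else if h2 : (i : ℕ) = n then
    q * r ^ 2 * (x i + x 0 * (∑ j : Fin (n - 2), s j ^ 2) + t * x 0)
  else r * (x i + s ⟨(i : ℕ) - 2, by have := i.isLt; omega⟩)

/-!
The image of the base point `(1, 0, …, 0, −1)` under `T_{q,r,t,s}` is
`(q, r²t, r s₃, …, r sₙ, q r² (Σ s_j² + t − 1))`. Given `x ∈ Ω^<`, put
`D = x₁x₂ + x₁ Σ x_j² − x_{n+1}`, which is positive exactly because `x ∈ Ω^<`; then
`q = x₁`, `r = √(D / x₁)`, `t = x₁x₂ / D`, `s_j = x_j / r` solve this system.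
-/

lemma sum_ite_Ico_two_eq_sum_shift {M : Type*} [AddCommMonoid M] (n : ℕ)
    (f : Fin (n + 1) → M) :
    ∑ j : Fin (n + 1), (if 2 ≤ (j : ℕ) ∧ (j : ℕ) < n then f j else 0)
      = ∑ j : Fin (n - 2), f ⟨(j : ℕ) + 2, by have := j.isLt; omega⟩ := by
  refine (Fintype.sum_of_injective (fun j : Fin (n - 2) => (⟨(j : ℕ) + 2, by omega⟩ : Fin (n + 1)))
    (fun a b hab => Fin.ext (by simpa using hab)) _ _ (fun i hi => ?_) (fun j => ?_)).symm
  · refine if_neg fun ⟨h2, hn⟩ => hi ⟨⟨(i : ℕ) - 2, by omega⟩, Fin.ext ?_⟩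
    simp only
    omega
  · rw [if_pos]
    show 2 ≤ (j : ℕ) + 2 ∧ (j : ℕ) + 2 < n
    omega

lemma Tmap_basePoint (n : ℕ) (hn : 2 ≤ n) (q r t : ℝ) (s : Fin (n - 2) → ℝ) :
    Tmap n q r t s (fun i => if (i : ℕ) = 0 then 1 else if (i : ℕ) = n then -1 else 0) =
      fun i : Fin (n + 1) => if h0 : (i : ℕ) = 0 then q else if h1 : (i : ℕ) = 1 then r ^ 2 * t
        else if h2 : (i : ℕ) = n then q * r ^ 2 * (∑ j, s j ^ 2 + t - 1)
        else r * s ⟨(i : ℕ) - 2, by have := i.isLt; omega⟩ := by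
  funext i
  have hcoord (j : Fin (n - 2)) : ¬((j : ℕ) + 2 = 0) ∧ ¬((j : ℕ) + 2 = n) := ⟨by omega, by omega⟩
  unfold Tmap
  split_ifs with h0 h1 h2
  · simp [h0]
  · simp [h1, show 1 ≠ n by omega, hcoord]
  · simp only [h2, show n ≠ 0 by omega, Fin.val_zero, ↓reduceIte]
    ring
  · simp [h0, h2]

/-- The group of affine maps `T_{q,r,t,s}` acts transitively on `Ω^<`: every point of `Ω^<`
is the image of the base point `(1, 0, …, 0, −1)` under some `T_{q,r,t,s}`. -/
theorem Tmap_transitive_omegaLT (n : ℕ) (hn : 3 ≤ n) :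
    ∀ x ∈ omegaLT n hn, ∃ (q r t : ℝ) (s : Fin (n - 2) → ℝ), 0 < q ∧ r ≠ 0 ∧
      Tmap n q r t s
        (fun i => if (i : ℕ) = 0 then 1 else if (i : ℕ) = n then -1 else 0) = x := by
  rintro x ⟨hx0, hx⟩
  rw [sum_ite_Ico_two_eq_sum_shift] at hx
  set S := ∑ j : Fin (n - 2), x ⟨(j : ℕ) + 2, by omega⟩ ^ 2
  set D := x 0 * x ⟨1, by omega⟩ + x 0 * S - x (Fin.last n) with hD_def
  have hD : 0 < D := by linarith
  set r := √(D / x 0)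
  have hr : 0 < r := by positivity
  have hr2 : r ^ 2 * x 0 = D := by
    rw [Real.sq_sqrt (by positivity), div_mul_cancel₀ _ hx0.ne']
  refine ⟨x 0, r, x 0 * x ⟨1, by omega⟩ / D, fun j => x ⟨(j : ℕ) + 2, by omega⟩ / r, hx0,
    hr.ne', ?_⟩
  have hsum : ∑ j : Fin (n - 2), (x ⟨(j : ℕ) + 2, by omega⟩ / r) ^ 2 = S / r ^ 2 := by
    simp only [div_pow, ← Finset.sum_div, S]
  rw [Tmap_basePoint n (by omega)]
  funext i
  split_ifs with h0 h1 h2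
  · rw [show i = 0 from Fin.ext h0]
  · rw [show i = ⟨1, by omega⟩ from Fin.ext h1]
    field_simp
    rw [hr2, mul_comm]
  · rw [show i = Fin.last n from Fin.ext h2, hsum]
    field_simp
    linear_combination (x 0 * x ⟨1, by omega⟩ - D) * hr2 + D * hD_def
  · rw [mul_div_cancel₀ _ hr.ne']
    congr 1
    ext
    simp only
    omega
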